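/- Nash equilibrium of the GEM game: let p be a strictly positive pmf on finite Y and β > 0. Define L(f,q) = Σ_y q(y) log f(y) - Σ_y p(y) log f(y) (to be minimized in f over strictly positive pmfs) and Q(f,q) = Σ_y q(y) log f(y) + β·H(q) (to be maximized in q over pmfs). Then (f*, q*) with q* = p and f*(y) = p(y)^β / Σ_{y'} p(y')^β is the unique pair such that f* is a stationary point of L(·, q*) restricted to the simplex and q* = argmax_q Q(f*, q). -/

import Mathlib

/-!
For fixed `f`, on the simplex `Q(f, q) = β log Z - β KL(q ‖ g)`, where `g = f^{1/β} / Z` is the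
escort distribution of order `1/β` of `f`; by Gibbs' inequality `g` is the unique maximizer of
`Q(f, ·)`. Stationarity of `L(·, q)` makes `q - p` a multiple of `f`, and comparing total masses
gives `q = p`. Hence `p` is the escort of order `1/β` of `f`, and since escorts compose
multiplicatively in the order, `f` is the escort of order `β` of `p`.
-/

open Real Finset

section Gibbs

lemma mul_log_sub_mul_log_le {a b : ℝ} (ha : 0 < a) (hb : 0 ≤ b) :
    b * log a - b * log b ≤ a - b := by
  rcases hb.eq_or_lt with rfl | hb
  · simpa using ha.le
  have h := mul_le_mul_of_nonneg_left (log_le_sub_one_of_pos (div_pos ha hb)) hb.le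
  rw [log_div ha.ne' hb.ne', mul_sub_one, mul_div_cancel₀ _ hb.ne'] at h
  linarith

lemma mul_log_sub_mul_log_lt {a b : ℝ} (ha : 0 < a) (hb : 0 ≤ b) (hab : a ≠ b) :
    b * log a - b * log b < a - b := by
  rcases hb.eq_or_lt with rfl | hb
  · simpa using ha
  have hne : a / b ≠ 1 := fun h => hab ((div_eq_one_iff_eq hb.ne').mp h)
  have h := mul_lt_mul_of_pos_left (log_lt_sub_one_of_pos (div_pos ha hb) hne) hb
  rw [log_div ha.ne' hb.ne', mul_sub_one, mul_div_cancel₀ _ hb.ne'] at h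
  linarith

variable {ι : Type*} [Fintype ι] {g q : ι → ℝ}

theorem sum_mul_log_le_sum_mul_log (hg : ∀ y, 0 < g y) (hq : ∀ y, 0 ≤ q y)
    (hsum : ∑ y, g y = ∑ y, q y) :
    ∑ y, q y * log (g y) ≤ ∑ y, q y * log (q y) := by
  have := sum_le_sum fun y (_ : y ∈ univ) => mul_log_sub_mul_log_le (hg y) (hq y)
  rw [sum_sub_distrib, sum_sub_distrib, hsum, sub_self] at this
  linarith

theorem sum_mul_log_lt_sum_mul_log (hg : ∀ y, 0 < g y) (hq : ∀ y, 0 ≤ q y)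
    (hsum : ∑ y, g y = ∑ y, q y) (hne : g ≠ q) :
    ∑ y, q y * log (g y) < ∑ y, q y * log (q y) := by
  obtain ⟨y₀, hy₀⟩ := Function.ne_iff.mp hne
  have := sum_lt_sum (fun y (_ : y ∈ univ) => mul_log_sub_mul_log_le (hg y) (hq y))
    ⟨y₀, mem_univ _, mul_log_sub_mul_log_lt (hg y₀) (hq y₀) hy₀⟩
  rw [sum_sub_distrib, sum_sub_distrib, hsum, sub_self] at this
  linarith

end Gibbs

section Escort

variable {ι : Type*} [Fintype ι] {f : ι → ℝ}

noncomputable def escort (f : ι → ℝ) (t : ℝ) (y : ι) : ℝ :=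
  f y ^ t / ∑ y', f y' ^ t

lemma escort_one (hf1 : ∑ y, f y = 1) : escort f 1 = f := by
  funext y
  simp [escort, hf1]

variable [Nonempty ι]

lemma sum_rpow_pos (hf : ∀ y, 0 < f y) (t : ℝ) : 0 < ∑ y, f y ^ t :=
  sum_pos (fun y _ => rpow_pos_of_pos (hf y) t) univ_nonempty

lemma escort_pos (hf : ∀ y, 0 < f y) (t : ℝ) (y : ι) : 0 < escort f t y :=
  div_pos (rpow_pos_of_pos (hf y) t) (sum_rpow_pos hf t)

lemma sum_escort (hf : ∀ y, 0 < f y) (t : ℝ) : ∑ y, escort f t y = 1 := by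
  simp only [escort, ← sum_div]
  exact div_self (sum_rpow_pos hf t).ne'

lemma escort_escort (hf : ∀ y, 0 < f y) (s t : ℝ) :
    escort (escort f s) t = escort f (s * t) := by
  funext y
  have hS := sum_rpow_pos hf s
  have hpow : ∀ y, (escort f s y) ^ t = f y ^ (s * t) / (∑ y', f y' ^ s) ^ t := fun y => by
    rw [escort, div_rpow (rpow_pos_of_pos (hf y) s).le hS.le, ← rpow_mul (hf y).le]
  show escort f s y ^ t / ∑ y', escort f s y' ^ t = _
  simp only [hpow, ← sum_div]
  rw [div_div_div_cancel_right₀ (rpow_pos_of_pos hS t).ne', escort]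

lemma log_escort (hf : ∀ y, 0 < f y) (t : ℝ) (y : ι) :
    log (escort f t y) = t * log (f y) - log (∑ y', f y' ^ t) := by
  rw [escort, log_div (rpow_pos_of_pos (hf y) t).ne' (sum_rpow_pos hf t).ne', log_rpow (hf y)]

lemma sum_mul_log_escort (hf : ∀ y, 0 < f y) (t : ℝ) {q : ι → ℝ} (hq : ∑ y, q y = 1) :
    ∑ y, q y * log (escort f t y) = t * ∑ y, q y * log (f y) - log (∑ y', f y' ^ t) := by
  simp only [log_escort hf, mul_sub, sum_sub_distrib, ← sum_mul, hq, one_mul, mul_left_comm _ t,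
    ← mul_sum]

end Escort

section Payoff

variable {ι : Type*} [Fintype ι] [Nonempty ι]

noncomputable def gemPayoff (β : ℝ) (f q : ι → ℝ) : ℝ :=
  (∑ y, q y * log (f y)) + β * (-∑ y, q y * log (q y))

lemma gemPayoff_eq {β : ℝ} (hβ : β ≠ 0) {f q : ι → ℝ} (hf : ∀ y, 0 < f y)
    (hq : ∑ y, q y = 1) :
    gemPayoff β f q = β * log (∑ y, f y ^ β⁻¹)
      - β * (∑ y, q y * log (q y) - ∑ y, q y * log (escort f β⁻¹ y)) := by
  rw [gemPayoff, sum_mul_log_escort hf _ hq]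
  field_simp
  ring

theorem isMaxOn_gemPayoff_iff {β : ℝ} (hβ : 0 < β) {f q : ι → ℝ} (hf : ∀ y, 0 < f y)
    (hq : q ∈ stdSimplex ℝ ι) :
    IsMaxOn (gemPayoff β f) (stdSimplex ℝ ι) q ↔ q = escort f β⁻¹ := by
  have hg := escort_pos hf β⁻¹
  have hg1 := sum_escort hf β⁻¹
  have hgS : escort f β⁻¹ ∈ stdSimplex ℝ ι := ⟨fun y => (hg y).le, hg1⟩
  have hmax : gemPayoff β f (escort f β⁻¹) = β * log (∑ y, f y ^ β⁻¹) := by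
    rw [gemPayoff_eq hβ.ne' hf hg1, sub_self, mul_zero, sub_zero]
  constructor
  · intro h
    by_contra hne
    have hlt := sum_mul_log_lt_sum_mul_log hg hq.1 (by rw [hg1, hq.2]) (Ne.symm hne)
    have hle := isMaxOn_iff.mp h _ hgS
    rw [hmax, gemPayoff_eq hβ.ne' hf hq.2] at hle
    nlinarith
  · rintro rfl
    refine isMaxOn_iff.mpr fun q' hq' => ?_
    have hle := sum_mul_log_le_sum_mul_log hg hq'.1 (by rw [hg1, hq'.2])
    rw [hmax, gemPayoff_eq hβ.ne' hf hq'.2]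
    nlinarith

end Payoff

lemma eq_of_sub_div_eq_const {ι : Type*} [Fintype ι] {f q p : ι → ℝ} {c : ℝ}
    (hf : ∀ y, f y ≠ 0) (hfsum : ∑ y, f y ≠ 0) (hsum : ∑ y, q y = ∑ y, p y)
    (hc : ∀ y, (q y - p y) / f y = c) : q = p := by
  have hqp : ∀ y, q y - p y = c * f y := fun y => by
    rw [← hc y, div_mul_cancel₀ _ (hf y)]
  have hc0 : c = 0 := by
    have := sum_congr rfl fun y (_ : y ∈ univ) => hqp y
    rw [sum_sub_distrib, hsum, sub_self, ← mul_sum] at this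
    exact (mul_eq_zero.mp this.symm).resolve_right hfsum
  funext y
  simpa [hc0, sub_eq_zero] using hqp y

/-- Nash equilibrium of the GEM game: with `L(f,q) = Σ_y q(y) log f(y) - Σ_y p(y) log f(y)`
(minimized in `f` over strictly positive pmfs) and
`Q(f,q) = Σ_y q(y) log f(y) + β·H(q)` (maximized in `q` over pmfs),
the pair `q* = p`, `f*(y) = p(y)^β / Σ_{y'} p(y')^β` is the unique pair such that
`f*` is a stationary point of `L(·,q*)` on the simplex (gradient proportional to
the all-ones vector) and `q*` maximizes `Q(f*,·)`. -/
theorem gem_nash_equilibrium {ι : Type*} [Fintype ι]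
    (p : ι → ℝ) (hp : ∀ y, 0 < p y) (hpsum : ∑ y, p y = 1)
    (β : ℝ) (hβ : 0 < β)
    (Q : (ι → ℝ) → (ι → ℝ) → ℝ)
    (hQ : Q = fun f q => (∑ y, q y * Real.log (f y)) + β * (-∑ y, q y * Real.log (q y)))
    (fstar qstar : ι → ℝ)
    (hfstar : fstar = fun y => p y ^ β / ∑ y', p y' ^ β)
    (hqstar : qstar = p) :
    -- (f*, q*) is an equilibrium pair:
    ((∀ y, 0 < fstar y) ∧ (∑ y, fstar y = 1) ∧
      (∃ c : ℝ, ∀ y, (qstar y - p y) / fstar y = c) ∧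
      (∀ q : ι → ℝ, (∀ y, 0 ≤ q y) → ∑ y, q y = 1 → Q fstar q ≤ Q fstar qstar)) ∧
    -- and it is the unique such pair:
    (∀ f q : ι → ℝ, (∀ y, 0 < f y) → ∑ y, f y = 1 →
      (∀ y, 0 ≤ q y) → ∑ y, q y = 1 →
      (∃ c : ℝ, ∀ y, (q y - p y) / f y = c) →
      (∀ q' : ι → ℝ, (∀ y, 0 ≤ q' y) → ∑ y, q' y = 1 → Q f q' ≤ Q f q) →
      f = fstar ∧ q = qstar) := by
  have : Nonempty ι := by
    by_contra h
    simp [not_nonempty_iff.mp h] at hpsum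
  obtain rfl : Q = gemPayoff β := hQ
  obtain rfl : fstar = escort p β := hfstar
  subst qstar
  have hp_escort : escort (escort p β) β⁻¹ = p := by
    rw [escort_escort hp, mul_inv_cancel₀ hβ.ne', escort_one hpsum]
  refine ⟨⟨escort_pos hp β, sum_escort hp β, ⟨0, fun y => by simp⟩, fun q hq hq1 => ?_⟩, ?_⟩
  · have hmax := (isMaxOn_gemPayoff_iff hβ (escort_pos hp β) ⟨fun y => (hp y).le, hpsum⟩).mpr
      hp_escort.symm
    exact isMaxOn_iff.mp hmax q ⟨hq, hq1⟩
  · rintro f q hf hf1 hq hq1 ⟨c, hc⟩ hmax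
    obtain rfl : q = p :=
      eq_of_sub_div_eq_const (fun y => (hf y).ne') (by simp [hf1]) (hq1.trans hpsum.symm) hc
    have hq_escort := (isMaxOn_gemPayoff_iff hβ hf ⟨hq, hq1⟩).mp
      (isMaxOn_iff.mpr fun q' hq' => hmax q' hq'.1 hq'.2)
    refine ⟨?_, rfl⟩
    rw [hq_escort, escort_escort hf, inv_mul_cancel₀ hβ.ne', escort_one hf1]
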